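/- Consider the noise-free discrete-time LTI system x(k+1) = A x(k) + B u(k), y(k) = C x(k). Fix h ≥ 1, t ≥ 1, a start time k, and set s = h·n + (h+t)·p, so that the matrix L[y,u] obtained by stacking the block Hankel matrix H_y(k;h;s) on top of the block Hankel matrix H_u(k;h+t;s) is a square s×s matrix. Suppose the extended observability matrix O_c(h) has rank m and that L[y,u] is invertible. Then the extended Markov parameter matrix satisfies G(t) = 𝖸(k+h+t;s) · L[y,u]⁻¹ · [0; I_{tp}], where [0; I_{tp}] is the s×(tp) matrix whose top (s−tp) rows are zero and whose bottom tp rows form the identity, i.e., G(t) consists of the last tp columns of 𝖸(k+h+t;s)·L[y,u]⁻¹. -/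

import Mathlib

/-!
Let `X = [x(k), …, x(k+s-1)]`, let `T` be the block lower-triangular Toeplitz matrix of Markov
parameters with `h` block rows and `h + t` block columns, and `Γ = [CA^{h+t-1}B, …, CB]`. Unrolling
the recursion gives `H_y(k;h;s) = O_c(h) X + T H_u(k;h+t;s)` and
`𝖸(k+h+t;s) = C A^{h+t} X + Γ H_u(k;h+t;s)`. Since `O_c(h)` has full column rank it has a left
inverse `P`, hence `𝖸(k+h+t;s) = [C A^{h+t} P, Γ - C A^{h+t} P T] L[y,u]`. Multiplying by
`L[y,u]⁻¹ [0; I]` keeps the last `t` block columns of `Γ - C A^{h+t} P T`: those of `T` vanish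
because `T` is strictly lower triangular with only `h` block rows, and those of `Γ` form `G(t)`.
-/

open Matrix

theorem Matrix.exists_mul_eq_one_of_rank_eq_card {K α β : Type*} [Field K] [Fintype α]
    [Fintype β] [DecidableEq α] [DecidableEq β] (M : Matrix α β K)
    (hM : M.rank = Fintype.card β) : ∃ P : Matrix β α K, P * M = 1 := by
  have hker : LinearMap.ker M.mulVecLin = ⊥ := by
    have := LinearMap.finrank_range_add_finrank_ker M.mulVecLin
    rw [Module.finrank_fintype_fun_eq_card, ← Matrix.rank, hM, Nat.add_eq_left] at this
    exact Submodule.finrank_eq_zero.mp this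
  obtain ⟨g, hg⟩ := M.mulVecLin.exists_leftInverse_of_injective hker
  refine ⟨LinearMap.toMatrix' g, Matrix.toLin'.injective ?_⟩
  rw [Matrix.toLin'_mul, Matrix.toLin'_toMatrix', Matrix.toLin'_one]
  exact hg

theorem Matrix.mul_mul_fromRows_zero_eq_of_fromRows_mul_eq_one {R α β γ σ ο κ : Type*} [Ring R]
    [Fintype α] [Fintype β] [Fintype σ] [Fintype κ] [DecidableEq α] [DecidableEq β] [DecidableEq σ]
    {O : Matrix α σ R} {P : Matrix σ α R} (hPO : P * O = 1) (X : Matrix σ κ R)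
    {T : Matrix α β R} (U : Matrix β κ R) (F : Matrix ο σ R) (G : Matrix ο β R)
    {Linv : Matrix κ (α ⊕ β) R} (hLinv : fromRows (O * X + T * U) U * Linv = 1)
    {E : Matrix β γ R} (hTE : T * E = 0) :
    (F * X + G * U) * Linv * fromRows (0 : Matrix α γ R) E = G * E := by
  have hfactor : F * X + G * U =
      fromCols (F * P) (G - F * P * T) * fromRows (O * X + T * U) U := by
    rw [fromCols_mul_fromRows, Matrix.mul_add, Matrix.sub_mul, ← Matrix.mul_assoc,
      Matrix.mul_assoc F P O, hPO, Matrix.mul_one, Matrix.mul_assoc (F * P)]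
    abel
  rw [hfactor, Matrix.mul_assoc (fromCols _ _), hLinv, Matrix.mul_one, fromCols_mul_fromRows,
    Matrix.mul_zero, zero_add, Matrix.sub_mul, Matrix.mul_assoc, hTE, Matrix.mul_zero, sub_zero]

theorem Finset.sum_range_ite_lt {M : Type*} [AddCommMonoid M] {d N : ℕ} (hd : d ≤ N)
    (f : ℕ → M) :
    ∑ l ∈ Finset.range N, (if l < d then f l else 0) = ∑ l ∈ Finset.range d, f l := by
  rw [← Finset.sum_filter]
  congr 1
  ext l
  simp only [Finset.mem_filter, Finset.mem_range]
  omega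

namespace LTI

variable {R σ ι ο : Type*} [Semiring R] [Fintype σ] [DecidableEq σ] [Fintype ι]
  (A : Matrix σ σ R) (B : Matrix σ ι R) (C : Matrix ο σ R)

/-- Block row `d` of the lower-triangular Toeplitz matrix of Markov parameters over a horizon
of `N` inputs. -/
def markovRow (N d : ℕ) : Matrix ο (Fin N × ι) R :=
  Matrix.of fun a lb => if (lb.1 : ℕ) < d then (C * A ^ (d - 1 - (lb.1 : ℕ)) * B) a lb.2 else 0

variable (R ι) in
/-- The lower block `I_{tp}` of the paper's `[0; I_{tp}]`. -/
def shiftSelector [DecidableEq ι] (h t : ℕ) : Matrix (Fin (h + t) × ι) (Fin t × ι) R :=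
  (1 : Matrix (Fin (h + t) × ι) (Fin (h + t) × ι) R).submatrix (Equiv.refl _)
    fun jb => (Fin.natAdd h jb.1, jb.2)

theorem markovRows_mul_shiftSelector [DecidableEq ι] (h t : ℕ) :
    Matrix.of (fun (ia : Fin h × ο) => markovRow A B C (h + t) ia.1 ia.2) *
      shiftSelector R ι h t = 0 := by
  rw [shiftSelector, mul_submatrix_one]
  ext ia jb
  simp only [markovRow, submatrix_apply, of_apply, Equiv.coe_refl, Equiv.refl_symm,
    Function.comp_apply, id_eq, Fin.natAdd, Matrix.zero_apply]
  rw [if_neg (by omega)]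

theorem markovRow_self_mul_shiftSelector [DecidableEq ι] (h t : ℕ) :
    markovRow A B C (h + t) (h + t) * shiftSelector R ι h t =
      Matrix.of fun a jb => (C * A ^ (t - 1 - (jb.1 : ℕ)) * B) a jb.2 := by
  rw [shiftSelector, mul_submatrix_one]
  ext a jb
  simp [markovRow, show h + t - 1 - (h + jb.1) = t - 1 - jb.1 by omega]

variable {A B C} {x : ℕ → σ → R} {u : ℕ → ι → R} {y : ℕ → ο → R}

theorem state_add_eq (hx : ∀ j, x (j + 1) = A *ᵥ x j + B *ᵥ u j) (j d : ℕ) :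
    x (j + d) = (A ^ d) *ᵥ x j + ∑ l ∈ Finset.range d, (A ^ (d - 1 - l) * B) *ᵥ u (j + l) := by
  induction d with
  | zero => simp
  | succ d ih =>
    have hshift : ∀ l ∈ Finset.range d,
        A *ᵥ ((A ^ (d - 1 - l) * B) *ᵥ u (j + l)) = (A ^ (d - l) * B) *ᵥ u (j + l) := by
      intro l hl
      rw [Finset.mem_range] at hl
      rw [mulVec_mulVec, ← Matrix.mul_assoc, ← pow_succ', show d - 1 - l + 1 = d - l by omega]
    rw [← add_assoc, hx, ih, mulVec_add, mulVec_mulVec, ← pow_succ', mulVec_sum,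
      Finset.sum_congr rfl hshift, Finset.sum_range_succ, Nat.add_sub_cancel, Nat.sub_self,
      pow_zero, Matrix.one_mul, add_assoc]

theorem output_add_eq (hx : ∀ j, x (j + 1) = A *ᵥ x j + B *ᵥ u j) (hy : ∀ j, y j = C *ᵥ x j)
    (j d : ℕ) :
    y (j + d) = (C * A ^ d) *ᵥ x j
      + ∑ l ∈ Finset.range d, (C * A ^ (d - 1 - l) * B) *ᵥ u (j + l) := by
  simp only [hy, state_add_eq hx, mulVec_add, mulVec_sum, mulVec_mulVec, Matrix.mul_assoc]

theorem output_window_eq (hx : ∀ j, x (j + 1) = A *ᵥ x j + B *ᵥ u j)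
    (hy : ∀ j, y j = C *ᵥ x j) {N d : ℕ} (hd : d ≤ N) (k s : ℕ) :
    (Matrix.of fun a (j : Fin s) => y (k + d + j) a) =
      C * A ^ d * Matrix.of (fun c (j : Fin s) => x (k + j) c) +
        markovRow A B C N d *
          Matrix.of (fun (lb : Fin N × ι) (j : Fin s) => u (k + lb.1 + j) lb.2) := by
  ext a j
  rw [of_apply, show k + d + j = (k + j) + d by omega, output_add_eq hx hy, Matrix.add_apply,
    Pi.add_apply, Finset.sum_apply]
  congr 1
  rw [mul_apply, Fintype.sum_prod_type]
  simp only [markovRow, of_apply, ite_mul, zero_mul, Finset.sum_ite_irrel, Finset.sum_const_zero]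
  rw [Fin.sum_univ_eq_sum_range (fun l => if l < d then
    ∑ b, (C * A ^ (d - 1 - l) * B) a b * u (k + l + j) b else 0), Finset.sum_range_ite_lt hd]
  refine Finset.sum_congr rfl fun l _ => ?_
  rw [show k + l + j = k + j + l by omega]
  rfl

theorem hankel_output_eq (hx : ∀ j, x (j + 1) = A *ᵥ x j + B *ᵥ u j)
    (hy : ∀ j, y j = C *ᵥ x j) {h N : ℕ} (hN : h ≤ N) (k s : ℕ) :
    (Matrix.of fun (ia : Fin h × ο) (j : Fin s) => y (k + ia.1 + j) ia.2) =
      Matrix.of (fun (ia : Fin h × ο) c => (C * A ^ (ia.1 : ℕ)) ia.2 c) *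
          Matrix.of (fun c (j : Fin s) => x (k + j) c) +
        Matrix.of (fun (ia : Fin h × ο) => markovRow A B C N ia.1 ia.2) *
          Matrix.of (fun (lb : Fin N × ι) (j : Fin s) => u (k + lb.1 + j) lb.2) := by
  ext ⟨i, a⟩ j
  exact congr_fun₂ (output_window_eq hx hy (by omega : (i : ℕ) ≤ N) k s) a j

end LTI

theorem markov_parameter_identification
    (m n p : ℕ) (h t k : ℕ) 
    (A : Matrix (Fin m) (Fin m) ℝ) (B : Matrix (Fin m) (Fin p) ℝ)
    (C : Matrix (Fin n) (Fin m) ℝ)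
    (x : ℕ → Fin m → ℝ) (u : ℕ → Fin p → ℝ) (y : ℕ → Fin n → ℝ)
    (hx : ∀ j, x (j + 1) = A.mulVec (x j) + B.mulVec (u j))
    (hy : ∀ j, y j = C.mulVec (x j))
    (hrank : (Matrix.of fun (ia : Fin h × Fin n) (b : Fin m) =>
        (C * A ^ (ia.1 : ℕ)) ia.2 b : Matrix (Fin h × Fin n) (Fin m) ℝ).rank = m)
    (L : Matrix ((Fin h × Fin n) ⊕ (Fin (h + t) × Fin p))
          (Fin (h * n + (h + t) * p)) ℝ)
    (hLy : ∀ (ia : Fin h × Fin n) (j : Fin (h * n + (h + t) * p)),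
        L (Sum.inl ia) j = y (k + (ia.1 : ℕ) + (j : ℕ)) ia.2)
    (hLu : ∀ (ib : Fin (h + t) × Fin p) (j : Fin (h * n + (h + t) * p)),
        L (Sum.inr ib) j = u (k + (ib.1 : ℕ) + (j : ℕ)) ib.2)
    (Linv : Matrix (Fin (h * n + (h + t) * p))
          ((Fin h × Fin n) ⊕ (Fin (h + t) × Fin p)) ℝ)
    (hLinv₁ : L * Linv = 1) :
    (Matrix.of fun (a : Fin n) (jb : Fin t × Fin p) =>
        (C * A ^ (t - 1 - (jb.1 : ℕ)) * B) a jb.2) =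
      (Matrix.of fun (a : Fin n) (j : Fin (h * n + (h + t) * p)) =>
          y (k + h + t + (j : ℕ)) a) * Linv *
      (Matrix.of fun (r : (Fin h × Fin n) ⊕ (Fin (h + t) × Fin p))
          (jb : Fin t × Fin p) =>
        match r with
        | Sum.inl _ => 0
        | Sum.inr ib =>
            if (ib.1 : ℕ) = h + (jb.1 : ℕ) ∧ ib.2 = jb.2 then (1 : ℝ) else 0) := by
  obtain ⟨P, hPO⟩ := exists_mul_eq_one_of_rank_eq_card _ (hrank.trans (Fintype.card_fin m).symm)
  have hL : L = fromRows
      (Matrix.of fun (ia : Fin h × Fin n) (j : Fin (h * n + (h + t) * p)) => y (k + ia.1 + j) ia.2)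
      (Matrix.of fun (ib : Fin (h + t) × Fin p) j => u (k + ib.1 + j) ib.2) := by
    ext (ia | ib) j
    exacts [hLy ia j, hLu ib j]
  rw [hL, LTI.hankel_output_eq hx hy (Nat.le_add_right h t)] at hLinv₁
  have hsel : (Matrix.of fun (r : (Fin h × Fin n) ⊕ (Fin (h + t) × Fin p))
        (jb : Fin t × Fin p) =>
        match r with
        | Sum.inl _ => 0
        | Sum.inr ib => if (ib.1 : ℕ) = h + (jb.1 : ℕ) ∧ ib.2 = jb.2 then (1 : ℝ) else 0) =
      fromRows 0 (LTI.shiftSelector ℝ (Fin p) h t) := by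
    ext (ia | ib) jb
    · rfl
    · simp [LTI.shiftSelector, one_apply, Prod.ext_iff, Fin.ext_iff]
  rw [Nat.add_assoc k h t, LTI.output_window_eq hx hy le_rfl, hsel,
    mul_mul_fromRows_zero_eq_of_fromRows_mul_eq_one hPO _ _ _ _ hLinv₁
      (LTI.markovRows_mul_shiftSelector A B C h t),
    LTI.markovRow_self_mul_shiftSelector]
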